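/- arXiv:math/0106006 — 3 statements merged into one kernel-verified Lean document; each statement's English description precedes it below -/
import Mathlib

section
/- Let A be a unital ring equipped with a decreasing filtration A = F_0 \supseteq F_1 \supseteq F_2 \supseteq \cdots by additive subgroups satisfying F_n \cdot F_m \subseteq F_{n+m} for all n,m \ge 0. Assume A is complete and Hausdorff with respect to this filtration, i.e. the canonical ring homomorphism A \to \varprojlim_n A/F_n is bijective. If the associated graded ring gr(A) = \bigoplus_{n\ge 0} F_n/F_{n+1} is left noetherian, then A is left noetherian. -/
/-!
Since `gr(A)` is noetherian, the left ideal `gr(I)` spanned by the symbols of elements of a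
left ideal `I` is generated by the symbols of finitely many `xᵢ ∈ I ∩ F_{dᵢ}`. Hence every
`a ∈ I ∩ Fₜ` is congruent modulo `Fₜ₊₁` to some `∑ cᵢ xᵢ` with `cᵢ ∈ F_{t-dᵢ}`. Iterating
this produces coefficient sequences whose increments tend to zero; by completeness they
converge to some `bᵢ`, and then `a - ∑ bᵢ xᵢ` lies in every `Fₙ`, so it vanishes because the
filtration is Hausdorff. Thus the `xᵢ` generate `I`.
-/

open DirectSum

section

variable {A : Type*} [Ring A]

/-- A decreasing multiplicative filtration `A = F₀ ⊇ F₁ ⊇ F₂ ⊇ ⋯` of a ring `A` by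
additive subgroups, with `Fₙ · Fₘ ⊆ Fₙ₊ₘ`. -/
structure RingFiltration (A : Type*) [Ring A] where
  F : ℕ → AddSubgroup A
  zero_eq_top : F 0 = ⊤
  antitone : ∀ n, F (n + 1) ≤ F n
  mul_mem : ∀ ⦃m n : ℕ⦄ ⦃x y : A⦄, x ∈ F m → y ∈ F n → x * y ∈ F (m + n)

namespace RingFiltration

variable (𝓕 : RingFiltration A)

instance : SetLike.GradedMonoid 𝓕.F where
  one_mem := by rw [𝓕.zero_eq_top]; trivial
  mul_mem _ _ _ _ hx hy := 𝓕.mul_mem hx hy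

/-- The graded ring `⨁ₙ Fₙ` attached to the filtration. -/
abbrev Rees := ⨁ n, 𝓕.F n

theorem mem_succ_of_right {u v : 𝓕.Rees}
    (hv : ∀ n, (v n : A) ∈ 𝓕.F (n + 1)) (n : ℕ) :
    ((u * v) n : A) ∈ 𝓕.F (n + 1) := by
  classical
  rw [DirectSum.coe_mul_apply]
  refine AddSubgroup.sum_mem _ ?_
  rintro ⟨i, j⟩ hij
  obtain ⟨-, hsum⟩ := Finset.mem_filter.mp hij
  have h : (u i : A) * (v j : A) ∈ 𝓕.F (i + (j + 1)) := 𝓕.mul_mem (u i).2 (hv j)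
  have hidx : i + (j + 1) = n + 1 := by omega
  rwa [hidx] at h

theorem mem_succ_of_left {u v : 𝓕.Rees}
    (hu : ∀ n, (u n : A) ∈ 𝓕.F (n + 1)) (n : ℕ) :
    ((u * v) n : A) ∈ 𝓕.F (n + 1) := by
  classical
  rw [DirectSum.coe_mul_apply]
  refine AddSubgroup.sum_mem _ ?_
  rintro ⟨i, j⟩ hij
  obtain ⟨-, hsum⟩ := Finset.mem_filter.mp hij
  have h : (u i : A) * (v j : A) ∈ 𝓕.F (i + 1 + j) := 𝓕.mul_mem (hu i) (v j).2
  have hidx : i + 1 + j = n + 1 := by omega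
  rwa [hidx] at h

/-- The congruence relation on `⨁ₙ Fₙ` whose quotient is the associated graded ring
`gr(A) = ⨁ₙ Fₙ/Fₙ₊₁` of the filtration. -/
def grCon : RingCon 𝓕.Rees where
  r x y := ∀ n, (x n : A) - (y n : A) ∈ 𝓕.F (n + 1)
  iseqv := by
    refine ⟨fun x n => by simpa using (𝓕.F (n + 1)).zero_mem, ?_, ?_⟩
    · intro x y h n
      simpa using (𝓕.F (n + 1)).neg_mem (h n)
    · intro x y w h1 h2 n
      simpa using (𝓕.F (n + 1)).add_mem (h1 n) (h2 n)
  add' := by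
    intro a b a' b' h1 h2 n
    have := (𝓕.F (n + 1)).add_mem (h1 n) (h2 n)
    rw [DirectSum.add_apply, DirectSum.add_apply, AddSubgroup.coe_add, AddSubgroup.coe_add]
    convert this using 1
    abel
  mul' := by
    intro a b a' b' h1 h2 n
    have key : a * a' - b * b' = a * (a' - b') + (a - b) * b' := by noncomm_ring
    have m1 : ((a * (a' - b')) n : A) ∈ 𝓕.F (n + 1) :=
      𝓕.mem_succ_of_right (fun m => by
        rw [DirectSum.sub_apply, AddSubgroup.coe_sub]; exact h2 m) n
    have m2 : (((a - b) * b') n : A) ∈ 𝓕.F (n + 1) :=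
      𝓕.mem_succ_of_left (fun m => by
        rw [DirectSum.sub_apply, AddSubgroup.coe_sub]; exact h1 m) n
    have : ((a * a' - b * b') n : A) ∈ 𝓕.F (n + 1) := by
      rw [key, DirectSum.add_apply, AddSubgroup.coe_add]
      exact (𝓕.F (n + 1)).add_mem m1 m2
    rwa [DirectSum.sub_apply, AddSubgroup.coe_sub] at this

/-- The associated graded ring `gr(A) = ⨁ₙ Fₙ/Fₙ₊₁` of the filtration, realized as the
quotient of the graded ring `⨁ₙ Fₙ` by the homogeneous two-sided ideal `⨁ₙ Fₙ₊₁`. -/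
abbrev AssociatedGraded := 𝓕.grCon.Quotient

/-- The congruence relation `a ~ b ↔ a - b ∈ Fₙ`; its quotient ring is `A/Fₙ`
(each `Fₙ` is a two-sided ideal since `F₀ = A`). -/
def levelCon (n : ℕ) : RingCon A where
  r a b := a - b ∈ 𝓕.F n
  iseqv := by
    refine ⟨fun a => by simpa using (𝓕.F n).zero_mem, ?_, ?_⟩
    · intro a b h
      simpa using (𝓕.F n).neg_mem h
    · intro a b d h1 h2
      simpa using (𝓕.F n).add_mem h1 h2
  add' := by
    intro a b a' b' h1 h2
    show a + a' - (b + b') ∈ 𝓕.F n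
    have heq : a + a' - (b + b') = (a - b) + (a' - b') := by abel
    rw [heq]
    exact (𝓕.F n).add_mem h1 h2
  mul' := by
    intro a b a' b' h1 h2
    show a * a' - b * b' ∈ 𝓕.F n
    have key : a * a' - b * b' = a * (a' - b') + (a - b) * b' := by noncomm_ring
    have m1 : a * (a' - b') ∈ 𝓕.F n := by
      have := 𝓕.mul_mem (x := a) (by rw [𝓕.zero_eq_top]; trivial) h2
      rwa [zero_add] at this
    have m2 : (a - b) * b' ∈ 𝓕.F n := by
      have := 𝓕.mul_mem h1 (y := b') (by rw [𝓕.zero_eq_top]; trivial)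
      rwa [add_zero] at this
    rw [key]
    exact (𝓕.F n).add_mem m1 m2

/-- The transition map `A/Fₙ₊₁ → A/Fₙ` of the inverse system. -/
def transition (n : ℕ) : (𝓕.levelCon (n + 1)).Quotient → (𝓕.levelCon n).Quotient :=
  Quotient.map' id fun a b h => 𝓕.antitone n h

/-- The inverse limit `lim_n A/Fₙ`, realized as the set of sequences compatible with
the transition maps. -/
def Lim : Type _ :=
  { f : ∀ n : ℕ, (𝓕.levelCon n).Quotient // ∀ n : ℕ, 𝓕.transition n (f (n + 1)) = f n }

/-- The canonical map `A → lim_n A/Fₙ` (the underlying function of the canonical ring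
homomorphism). -/
def toLim (a : A) : 𝓕.Lim :=
  ⟨fun n => (𝓕.levelCon n).mk' a, fun _ => rfl⟩

end RingFiltration

namespace RingFiltration

variable (𝓕 : RingFiltration A)

theorem antitone_F : Antitone 𝓕.F := antitone_nat_of_succ_le 𝓕.antitone

theorem mem_F_zero (a : A) : a ∈ 𝓕.F 0 := 𝓕.zero_eq_top ▸ AddSubgroup.mem_top a

theorem eq_of_forall_sub_mem (hinj : Function.Injective 𝓕.toLim) {a b : A}
    (hab : ∀ n, a - b ∈ 𝓕.F n) : a = b :=
  hinj <| Subtype.ext <| funext fun n => (RingCon.eq _).mpr (hab n)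

theorem exists_limit_of_succ_sub_mem (hsurj : Function.Surjective 𝓕.toLim) (s : ℕ → A)
    (hs : ∀ n, s (n + 1) - s n ∈ 𝓕.F n) : ∃ b, ∀ n, b - s n ∈ 𝓕.F n := by
  obtain ⟨b, hb⟩ :=
    hsurj ⟨fun n => (𝓕.levelCon n).mk' (s n), fun n => (RingCon.eq _).mpr (hs n)⟩
  exact ⟨b, fun n => (RingCon.eq _).mp (congrArg (fun f : 𝓕.Lim => f.1 n) hb)⟩

def symbol (n : ℕ) (a : 𝓕.F n) : 𝓕.AssociatedGraded :=
  𝓕.grCon.mk' (DirectSum.of (fun n => 𝓕.F n) n a)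

theorem grCon_mk'_eq_zero_iff (w : 𝓕.Rees) :
    𝓕.grCon.mk' w = 0 ↔ ∀ n, (w n : A) ∈ 𝓕.F (n + 1) := by
  rw [← map_zero 𝓕.grCon.mk']
  exact 𝓕.grCon.eq.trans (by simp [grCon])

def grIdeal (I : Ideal A) : Ideal 𝓕.AssociatedGraded :=
  Submodule.span _ {g | ∃ (n : ℕ) (a : 𝓕.F n), (a : A) ∈ I ∧ 𝓕.symbol n a = g}

theorem exists_lift_generators_grIdeal (I : Ideal A) (hfg : (𝓕.grIdeal I).FG) :
    ∃ (s : Finset 𝓕.AssociatedGraded) (deg : s → ℕ) (x : ∀ g, 𝓕.F (deg g)),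
      (∀ g, (x g : A) ∈ I) ∧ ∀ t (a : 𝓕.F t), (a : A) ∈ I → 𝓕.symbol t a ∈
        Submodule.span 𝓕.AssociatedGraded (Set.range fun g => 𝓕.symbol (deg g) (x g)) := by
  obtain ⟨s, hsI, hspan⟩ := (Submodule.fg_span_iff_fg_span_finset_subset _).mp hfg
  choose deg x hxI hsym using fun g : s => hsI g.2
  refine ⟨s, deg, x, hxI, fun t a ha => ?_⟩
  rw [funext hsym, Subtype.range_coe, ← hspan]
  exact Submodule.subset_span ⟨t, a, ha, rfl⟩

theorem exists_sub_sum_mul_mem_succ {ι : Type*} [Fintype ι] (deg : ι → ℕ)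
    (x : ∀ i, 𝓕.F (deg i)) {t : ℕ} (a : 𝓕.F t)
    (ha : 𝓕.symbol t a ∈ Submodule.span 𝓕.AssociatedGraded
      (Set.range fun i => 𝓕.symbol (deg i) (x i))) :
    ∃ c : ι → A, (∀ i, c i ∈ 𝓕.F (t - deg i)) ∧ (a : A) - ∑ i, c i * x i ∈ 𝓕.F (t + 1) := by
  obtain ⟨r, hr⟩ := Submodule.mem_span_range_iff_exists_fun _ |>.mp ha
  choose u hu using fun i => 𝓕.grCon.mk'_surjective (r i)
  set w : 𝓕.Rees := DirectSum.of (fun n => 𝓕.F n) t a -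
    ∑ i, u i * DirectSum.of (fun n => 𝓕.F n) (deg i) (x i)
  have hw : 𝓕.grCon.mk' w = 0 := by
    simp only [w, map_sub, map_sum, map_mul, hu, sub_eq_zero]
    exact hr.symm
  refine ⟨fun i => if deg i ≤ t then u i (t - deg i) else 0, fun i => ?_, ?_⟩
  · dsimp only
    split_ifs
    exacts [(u i (t - deg i)).2, zero_mem _]
  · convert (𝓕.grCon_mk'_eq_zero_iff w).mp hw t using 1
    simp [w, DirectSum.coe_mul_of_apply, ite_mul]

section Approximation

variable {ι : Type*} [Fintype ι] (deg : ι → ℕ) (x : ι → A)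

theorem exists_coeff_seq (I : Ideal A) (hxI : ∀ i, x i ∈ I)
    (happrox : ∀ t, ∀ a ∈ I, a ∈ 𝓕.F t →
      ∃ c : ι → A, (∀ i, c i ∈ 𝓕.F (t - deg i)) ∧ a - ∑ i, c i * x i ∈ 𝓕.F (t + 1))
    {a : A} (ha : a ∈ I) :
    ∃ d : ℕ → ι → A, (∀ t i, d (t + 1) i - d t i ∈ 𝓕.F (t - deg i)) ∧
      ∀ t, a - ∑ i, d t i * x i ∈ 𝓕.F t := by
  have hstep : ∀ t z, ∃ c : ι → A, z ∈ I → z ∈ 𝓕.F t →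
      (∀ i, c i ∈ 𝓕.F (t - deg i)) ∧ z - ∑ i, c i * x i ∈ 𝓕.F (t + 1) := by
    intro t z
    by_cases hz : z ∈ I ∧ z ∈ 𝓕.F t
    · obtain ⟨c, hc⟩ := happrox t z hz.1 hz.2
      exact ⟨c, fun _ _ => hc⟩
    · exact ⟨0, fun h₁ h₂ => absurd ⟨h₁, h₂⟩ hz⟩
  -- the correction is chosen for every `z`, so that the coefficients can be defined by recursion
  choose c hc using hstep
  let d : ℕ → ι → A := fun t => Nat.rec 0 (fun t dt => dt + c t (a - ∑ i, dt i * x i)) t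
  have hd : ∀ t, d (t + 1) = d t + c t (a - ∑ i, d t i * x i) := fun _ => rfl
  have hrem : ∀ t, a - ∑ i, d t i * x i ∈ I ∧ a - ∑ i, d t i * x i ∈ 𝓕.F t := by
    intro t
    induction t with
    | zero => simpa [d] using ⟨ha, 𝓕.mem_F_zero a⟩
    | succ t ih =>
      have heq : a - ∑ i, d (t + 1) i * x i
          = (a - ∑ i, d t i * x i) - ∑ i, c t (a - ∑ i, d t i * x i) i * x i := by
        simp only [hd, Pi.add_apply, add_mul, Finset.sum_add_distrib]
        abel
      rw [heq]
      exact ⟨I.sub_mem ih.1 (I.sum_mem fun i _ => I.mul_mem_left _ (hxI i)),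
        (hc t _ ih.1 ih.2).2⟩
  refine ⟨d, fun t i => ?_, fun t => (hrem t).2⟩
  rw [hd, Pi.add_apply, add_sub_cancel_left]
  exact (hc t _ (hrem t).1 (hrem t).2).1 i

theorem mem_span_of_coeff_seq (hcomplete : Function.Bijective 𝓕.toLim)
    (hx : ∀ i, x i ∈ 𝓕.F (deg i)) {a : A} (d : ℕ → ι → A)
    (hd : ∀ t i, d (t + 1) i - d t i ∈ 𝓕.F (t - deg i))
    (ha : ∀ t, a - ∑ i, d t i * x i ∈ 𝓕.F t) :
    a ∈ Submodule.span A (Set.range x) := by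
  have hlim : ∀ i, ∃ b, ∀ m, b - d (m + deg i) i ∈ 𝓕.F m := fun i =>
    𝓕.exists_limit_of_succ_sub_mem hcomplete.2 _ fun m => by
      simpa [Nat.add_right_comm m 1 (deg i)] using hd (m + deg i) i
  choose b hb using hlim
  refine Submodule.mem_span_range_iff_exists_fun A |>.mpr
    ⟨b, (𝓕.eq_of_forall_sub_mem hcomplete.1 fun m => ?_).symm⟩
  simp only [smul_eq_mul]
  set N := m + ∑ i, deg i
  have hdeg : ∀ i, deg i ≤ N := fun i =>
    (Finset.single_le_sum (fun _ _ => Nat.zero_le _) (Finset.mem_univ i)).trans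
      (Nat.le_add_left _ _)
  have htail : ∀ i, (d N i - b i) * x i ∈ 𝓕.F N := by
    intro i
    have hbN := hb i (N - deg i)
    rw [Nat.sub_add_cancel (hdeg i), sub_mem_comm_iff] at hbN
    simpa only [Nat.sub_add_cancel (hdeg i)] using 𝓕.mul_mem hbN (hx i)
  have hsplit : a - ∑ i, b i * x i = (a - ∑ i, d N i * x i) + ∑ i, (d N i - b i) * x i := by
    simp only [sub_mul, Finset.sum_sub_distrib]
    abel
  rw [hsplit]
  exact 𝓕.antitone_F (Nat.le_add_right m _)
    ((𝓕.F N).add_mem (ha N) ((𝓕.F N).sum_mem fun i _ => htail i))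

end Approximation

end RingFiltration

/-- let `A` be a unital ring with a decreasing multiplicative filtration
`A = F₀ ⊇ F₁ ⊇ ⋯` by additive subgroups (`Fₙ·Fₘ ⊆ Fₙ₊ₘ`), complete and Hausdorff with
respect to the filtration (the canonical ring homomorphism `A → lim_n A/Fₙ` is
bijective).  If the associated graded ring `gr(A) = ⨁ₙ Fₙ/Fₙ₊₁` is left noetherian,
then `A` is left noetherian. -/
theorem isNoetherianRing_of_complete_filtration
    (𝓕 : RingFiltration A)
    (hcomplete : Function.Bijective 𝓕.toLim)
    (hnoeth : IsNoetherianRing 𝓕.AssociatedGraded) :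
    IsNoetherianRing A := by
  refine (isNoetherianRing_iff_ideal_fg A).mpr fun I => ?_
  obtain ⟨s, deg, x, hxI, hsymb⟩ :=
    𝓕.exists_lift_generators_grIdeal I (IsNoetherian.noetherian (𝓕.grIdeal I))
  refine Submodule.fg_def.mpr ⟨Set.range fun g => (x g : A), Set.finite_range _,
    le_antisymm (Submodule.span_le.mpr (Set.range_subset_iff.mpr hxI)) fun a ha => ?_⟩
  obtain ⟨d, hd, had⟩ := 𝓕.exists_coeff_seq deg (fun g => x g) I hxI
    (fun t a ha haF => 𝓕.exists_sub_sum_mul_mem_succ deg x ⟨a, haF⟩ (hsymb t ⟨a, haF⟩ ha)) ha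
  exact 𝓕.mem_span_of_coeff_seq deg _ hcomplete (fun g => (x g).2) d hd had

end
end

section
/- Let R be a commutative Noetherian ring which is an algebra over the rational numbers, let d : R \to R be a derivation, and let J \subseteq R be an ideal with d(J) \subseteq J. Then d(\sqrt{J}) \subseteq \sqrt{J}, where \sqrt{J} denotes the radical of J. -/
section Aux

variable {R : Type*} [CommRing R] [Algebra ℚ R]

/-- division by a nonzero natural in a ℚ-algebra, inside an ideal -/
lemma aux_div_nat (J : Ideal R) (n : ℕ) (hn : n ≠ 0) (y : R)
    (h : (n : R) * y ∈ J) : y ∈ J := by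
  have h1 : ((n : ℚ)⁻¹ • (1 : R)) * ((n : R) * y) = y := by
    rw [smul_mul_assoc, one_mul]
    have : (n : R) = (n : ℚ) • (1 : R) := by
      simp [Algebra.smul_def]
    rw [this, smul_mul_assoc, one_mul, smul_smul, inv_mul_cancel₀ (by exact_mod_cast hn), one_smul]
  have := J.mul_mem_left ((n : ℚ)⁻¹ • (1 : R)) h
  rwa [h1] at this

end Aux

/-- if `R` is a commutative Noetherian ring which is a `ℚ`-algebra,
`d : R → R` is a derivation (additive and satisfying the Leibniz rule), and
`J` is an ideal with `d(J) ⊆ J`, then `d(√J) ⊆ √J`. -/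
theorem derivation_preserves_radical
    {R : Type*} [CommRing R] [IsNoetherianRing R] [Algebra ℚ R]
    (d : R → R)
    (hadd : ∀ a b : R, d (a + b) = d a + d b)
    (hleibniz : ∀ a b : R, d (a * b) = a * d b + b * d a)
    (J : Ideal R) (hdJ : ∀ x ∈ J, d x ∈ J) :
    ∀ x ∈ J.radical, d x ∈ J.radical := by
  -- d of a power
  have hpow : ∀ (a : R) (m : ℕ), d (a ^ (m + 1)) = (m + 1 : ℕ) * a ^ m * d a := by
    intro a m
    induction m with
    | zero => simp
    | succ m ih =>
      have : a ^ (m + 2) = a * a ^ (m + 1) := by ring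
      rw [this, hleibniz, ih]
      push_cast
      ring
  intro x hx
  obtain ⟨n, hxn⟩ := hx
  -- strengthen: x ^ (n+1) ∈ J
  have hxn1 : x ^ (n + 1) ∈ J := by
    rw [pow_succ]
    exact J.mul_mem_right _ hxn
  -- base: x^n * (d x)^1 ∈ J
  have base : x ^ n * d x ^ 1 ∈ J := by
    have h1 := hdJ _ hxn1
    rw [hpow] at h1
    have := aux_div_nat J (n + 1) (Nat.succ_ne_zero n) (x ^ n * d x ^ 1)
    apply this
    rw [pow_one]
    rw [mul_assoc] at h1
    exact_mod_cast h1
  -- step: x^(m+1) * (dx)^(2k+1) ∈ J → x^m * (dx)^(2k+3) ∈ J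
  have step : ∀ m k : ℕ, x ^ (m + 1) * d x ^ (2 * k + 1) ∈ J →
      x ^ m * d x ^ (2 * k + 3) ∈ J := by
    intro m k hA
    have hdA := hdJ _ hA
    rw [hleibniz] at hdA
    have hd1 : d (x ^ (m + 1)) = (m + 1 : ℕ) * x ^ m * d x := hpow x m
    have hd2 : d (d x ^ (2 * k + 1)) = (2 * k + 1 : ℕ) * d x ^ (2 * k) * d (d x) := by
      have := hpow (d x) (2 * k)
      simpa using this
    rw [hd1, hd2] at hdA
    -- multiply by d x
    have hB := J.mul_mem_left (d x) hdA
    have hC := J.mul_mem_left ((2 * k + 1 : ℕ) * d (d x)) hA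
    have key : ((m + 1 : ℕ) : R) * (x ^ m * d x ^ (2 * k + 3)) =
        d x * (x ^ (m + 1) * ((2 * k + 1 : ℕ) * d x ^ (2 * k) * d (d x)) +
          d x ^ (2 * k + 1) * ((m + 1 : ℕ) * x ^ m * d x))
        - ((2 * k + 1 : ℕ) * d (d x)) * (x ^ (m + 1) * d x ^ (2 * k + 1)) := by
      push_cast
      ring
    have : ((m + 1 : ℕ) : R) * (x ^ m * d x ^ (2 * k + 3)) ∈ J := by
      rw [key]; exact J.sub_mem hB hC
    exact aux_div_nat J (m + 1) (Nat.succ_ne_zero m) _ this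
  -- iterate: ∀ m k, x^m * (dx)^(2k+1) ∈ J → (dx)^(2*(k+m)+1) ∈ J
  have iter : ∀ m k : ℕ, x ^ m * d x ^ (2 * k + 1) ∈ J → d x ^ (2 * (k + m) + 1) ∈ J := by
    intro m
    induction m with
    | zero => intro k h; simpa using h
    | succ m ih =>
      intro k h
      have h2 := step m k h
      have h3 : x ^ m * d x ^ (2 * (k + 1) + 1) ∈ J := by
        have : 2 * (k + 1) + 1 = 2 * k + 3 := by ring
        rw [this]; exact h2
      have := ih (k + 1) h3
      have e : k + 1 + m = k + (m + 1) := by ring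
      rwa [e] at this
  exact ⟨2 * (0 + n) + 1, iter n 0 base⟩
end

section
/- Let k be a commutative ring which is a \mathbb{Q}-algebra, let n be a natural number, and let \pi : Fin\,n \to Fin\,n \to k be an arbitrary matrix of constants. On the polynomial algebra A = k[x_1,\dots,x_n] define the Moyal-type product f \star g := \sum_{m\ge 0} \frac{1}{m!} \sum_{i_1,\dots,i_m,\,j_1,\dots,j_m \in \{1,\dots,n\}} \Big(\prod_{r=1}^m \pi_{i_r j_r}\Big)\, (\partial_{i_1}\cdots\partial_{i_m} f)\,(\partial_{j_1}\cdots\partial_{j_m} g), where \partial_i is the partial derivative with respect to x_i (the sum over m is finite for polynomials f, g since all sufficiently high partial derivatives vanish). Then \star is associative: (f \star g) \star h = f \star (g \star h) for all f, g, h \in A, and 1 \star f = f \star 1 = f. -/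
/-!
Write `P = ∑ πᵢⱼ ∂ᵢ ⊗ ∂ⱼ`, so that `f ⋆ g = ∑ₘ (1/m!) μ(Pᵐ(f ⊗ g))`. On three arguments let
`P₁₂, P₁₃, P₂₃` be the copies of `P` acting on the indicated pair of slots; they commute because
partial derivatives do. The Leibniz rule turns `P` applied after multiplying the first two slots
into `P₁₃ + P₂₃`, hence `(f ⋆ g) ⋆ h` is the truncation of `exp P₁₂ · exp (P₁₃ + P₂₃)` applied to
`f ⊗ g ⊗ h`, and symmetrically `f ⋆ (g ⋆ h)` is that of `exp P₂₃ · exp (P₁₂ + P₁₃)`. Both expand to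
`∑ P₁₂ᵃ P₁₃ᵇ P₂₃ᶜ / (a! b! c!)`, a finite sum because each contraction lowers degrees.
-/

open MvPolynomial

/-- Iterated partial derivative `∂_{i_1} ∂_{i_2} ⋯ ∂_{i_m} f` along a list of variable
indices. -/
noncomputable def iterPDeriv {k : Type*} [CommSemiring k] {n : ℕ}
    (l : List (Fin n)) (f : MvPolynomial (Fin n) k) : MvPolynomial (Fin n) k :=
  l.foldr (fun i p => pderiv i p) f

/-- The `m`-th term of the Moyal-type product attached to a constant matrix `π`:
`B_m(f,g) = (1/m!) ∑_{i⃗,j⃗} (∏_r π_{i_r j_r}) (∂_{i_1}⋯∂_{i_m} f)(∂_{j_1}⋯∂_{j_m} g)`. -/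
noncomputable def moyalTerm {k : Type*} [CommRing k] [Algebra ℚ k] {n : ℕ}
    (π : Fin n → Fin n → k) (m : ℕ) (f g : MvPolynomial (Fin n) k) :
    MvPolynomial (Fin n) k :=
  algebraMap ℚ (MvPolynomial (Fin n) k) (1 / m.factorial) *
    ∑ iv : Fin m → Fin n, ∑ jv : Fin m → Fin n,
      C (∏ r : Fin m, π (iv r) (jv r)) *
        iterPDeriv (List.ofFn iv) f * iterPDeriv (List.ofFn jv) g

/-- The Moyal-type product `f ⋆ g = ∑_{m ≥ 0} B_m(f,g)`.  For polynomials `f`, `g` only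
finitely many terms are nonzero (all sufficiently high partial derivatives of a polynomial
vanish), so the finitely supported sum `∑ᶠ` computes the actual sum. -/
noncomputable def moyalMul {k : Type*} [CommRing k] [Algebra ℚ k] {n : ℕ}
    (π : Fin n → Fin n → k) (f g : MvPolynomial (Fin n) k) : MvPolynomial (Fin n) k :=
  ∑ᶠ m : ℕ, moyalTerm π m f g

open Finset
open scoped Nat

theorem Fintype.sum_fin_succ_pi {M α : Type*} [AddCommMonoid M] [Fintype α] {m : ℕ}
    (F : (Fin (m + 1) → α) → M) : ∑ v, F v = ∑ a, ∑ v : Fin m → α, F (Fin.cons a v) := by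
  rw [← Fintype.sum_prod_type']
  exact (Fintype.sum_equiv (Fin.consEquiv fun _ => α) _ _ fun _ => rfl).symm

theorem Finset.sum_range_sum_antidiagonal {M : Type*} [AddCommMonoid M] {N : ℕ}
    {F : ℕ → ℕ → M} (hF : ∀ b c, N ≤ b + c → F b c = 0) :
    ∑ m ∈ range N, ∑ x ∈ antidiagonal m, F x.1 x.2 = ∑ b ∈ range N, ∑ c ∈ range N, F b c := by
  have hfiber : ∀ m ∈ range N,
      antidiagonal m = (range N ×ˢ range N).filter fun x => x.1 + x.2 = m := by
    intro m hm
    ext x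
    simp only [HasAntidiagonal.mem_antidiagonal, mem_filter, mem_product, mem_range] at hm ⊢
    omega
  rw [sum_congr rfl fun m hm => by rw [hfiber m hm, sum_filter], sum_comm,
    ← sum_product' (f := F)]
  refine sum_congr rfl fun x _ => ?_
  rw [sum_ite_eq]
  split_ifs with hx
  · rfl
  · exact (hF _ _ (by simpa using hx)).symm

theorem Nat.inv_factorial_mul_choose {b c m : ℕ} (h : b + c = m) :
    (m ! : ℚ)⁻¹ * m.choose b = (b ! * c ! : ℚ)⁻¹ := by
  subst h
  rw [Nat.cast_add_choose]
  field_simp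

/-- A truncated form of `exp x * exp (y + z) = ∑ xᵃ yᵇ zᶜ / (a! b! c!)`, seen through `ev`. -/
theorem sum_range_inv_factorial_smul_add_pow {S A : Type*} [Semiring S] [AddCommMonoid A]
    [Module ℚ A] (ev : S →+ A) {x y z : S} (hyz : Commute y z) {N : ℕ}
    (hvan : ∀ a b c, N ≤ b + c → ev (x ^ a * y ^ b * z ^ c) = 0) :
    ∑ m ∈ range N, ∑ p ∈ range N, ((m ! : ℚ)⁻¹ * (p ! : ℚ)⁻¹) • ev (x ^ p * (y + z) ^ m) =
      ∑ a ∈ range N, ∑ b ∈ range N, ∑ c ∈ range N,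
        ((a ! * b ! * c ! : ℚ)⁻¹) • ev (x ^ a * y ^ b * z ^ c) := by
  rw [sum_comm]
  refine sum_congr rfl fun p _ => ?_
  rw [← sum_range_sum_antidiagonal fun b c hbc => by rw [hvan p b c hbc, smul_zero]]
  refine sum_congr rfl fun m _ => ?_
  rw [hyz.add_pow', mul_sum, map_sum, smul_sum]
  refine sum_congr rfl fun q hq => ?_
  rw [mul_smul_comm, map_nsmul, ← Nat.cast_smul_eq_nsmul ℚ, smul_smul, ← mul_assoc,
    mul_right_comm, Nat.inv_factorial_mul_choose (HasAntidiagonal.mem_antidiagonal.mp hq)]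
  congr 1
  ring

namespace MvPolynomial

variable {R σ : Type*} [CommSemiring R]

theorem pderiv_comm (i j : σ) (p : MvPolynomial σ R) :
    pderiv i (pderiv j p) = pderiv j (pderiv i p) := by
  classical
  ext m
  simp only [coeff_pderiv, Finsupp.add_apply, Finsupp.single_apply, add_right_comm m]
  by_cases hij : i = j
  · subst hij; rfl
  · simp only [hij, Ne.symm hij, if_false, add_zero]
    ring

/-- Unlike `p.totalDegree < d`, this holds for `p = 0` and `d = 0`, so that `pderiv` lowers
the bound by exactly one. -/
def TotalDegreeLT (d : ℕ) (p : MvPolynomial σ R) : Prop :=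
  ∀ m : σ →₀ ℕ, d ≤ m.degree → coeff m p = 0

namespace TotalDegreeLT

variable {d e : ℕ} {p : MvPolynomial σ R}

theorem eq_zero (hp : TotalDegreeLT 0 p) : p = 0 :=
  ext _ _ fun m => hp m (Nat.zero_le _)

theorem mono (hp : TotalDegreeLT d p) (hde : d ≤ e) : TotalDegreeLT e p :=
  fun m hm => hp m (hde.trans hm)

theorem pderiv (hp : TotalDegreeLT (d + 1) p) (i : σ) : TotalDegreeLT d (pderiv i p) := by
  intro m hm
  rw [coeff_pderiv, hp _ (by simpa using hm), zero_mul]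

end TotalDegreeLT

theorem totalDegreeLT_of_totalDegree_lt {d : ℕ} {p : MvPolynomial σ R}
    (hp : p.totalDegree < d) : TotalDegreeLT d p := by
  intro m hm
  by_contra hm'
  exact absurd ((le_totalDegree (mem_support_iff.mpr hm')).trans_lt hp) (not_lt.mpr hm)

end MvPolynomial


noncomputable section

namespace Moyal

section Contraction

variable {R σ S : Type*} [CommSemiring R] [Fintype σ] [Semiring S] [Algebra R S]

def contraction (π : σ → σ → R) (a b : σ → S) : S := ∑ i, ∑ j, π i j • (a i * b j)

variable {π : σ → σ → R}

theorem commute_contraction {a b c d : σ → S}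
    (hac : ∀ i k, Commute (a i) (c k)) (had : ∀ i l, Commute (a i) (d l))
    (hbc : ∀ j k, Commute (b j) (c k)) (hbd : ∀ j l, Commute (b j) (d l)) :
    Commute (contraction π a b) (contraction π c d) :=
  Commute.sum_left _ _ _ fun i _ => Commute.sum_left _ _ _ fun j _ =>
    Commute.sum_right _ _ _ fun k _ => Commute.sum_right _ _ _ fun l _ =>
      ((((hac i k).mul_right (had i l)).mul_left
        ((hbc j k).mul_right (hbd j l))).smul_left _).smul_right _

variable {M : Type*} [AddCommMonoid M] [Module R M] {a b : σ → Module.End R M}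

theorem contraction_apply (x : M) :
    contraction π a b x = ∑ i, ∑ j, π i j • a i (b j x) := by
  simp [contraction]

theorem contraction_apply_mem {p q : Submodule R M} (h : ∀ i j, ∀ x ∈ p, a i (b j x) ∈ q)
    {x : M} (hx : x ∈ p) : contraction π a b x ∈ q := by
  rw [contraction_apply]
  exact sum_mem fun i _ => sum_mem fun j _ => Submodule.smul_mem _ _ (h i j x hx)

end Contraction

variable (R σ : Type*) [CommSemiring R]

abbrev Bilin := LinearMap.BilinMap R (MvPolynomial σ R) (MvPolynomial σ R)

abbrev Ternary := MvPolynomial σ R → MvPolynomial σ R → MvPolynomial σ R → MvPolynomial σ R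

def mul₃ : Ternary R σ := fun f g h => f * g * h

variable {R σ}

def pderivLeft (i : σ) : Module.End R (Bilin R σ) where
  toFun Ψ := Ψ ∘ₗ (pderiv i).toLinearMap
  map_add' _ _ := rfl
  map_smul' _ _ := rfl

def pderivRight (i : σ) : Module.End R (Bilin R σ) where
  toFun Ψ := Ψ.compl₂ (pderiv i).toLinearMap
  map_add' _ _ := rfl
  map_smul' _ _ := rfl

def pderiv₁ (i : σ) : Module.End R (Ternary R σ) where
  toFun Φ f g h := Φ (pderiv i f) g h
  map_add' _ _ := rfl
  map_smul' _ _ := rfl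

def pderiv₂ (i : σ) : Module.End R (Ternary R σ) where
  toFun Φ f g h := Φ f (pderiv i g) h
  map_add' _ _ := rfl
  map_smul' _ _ := rfl

def pderiv₃ (i : σ) : Module.End R (Ternary R σ) where
  toFun Φ f g h := Φ f g (pderiv i h)
  map_add' _ _ := rfl
  map_smul' _ _ := rfl

variable (i : σ) (Ψ Φ : Bilin R σ) (Θ : Ternary R σ) (f g h : MvPolynomial σ R)

@[simp] theorem pderivLeft_apply : pderivLeft i Ψ f g = Ψ (pderiv i f) g := rfl
@[simp] theorem pderivRight_apply : pderivRight i Ψ f g = Ψ f (pderiv i g) := rfl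
@[simp] theorem pderiv₁_apply : pderiv₁ i Θ f g h = Θ (pderiv i f) g h := rfl
@[simp] theorem pderiv₂_apply : pderiv₂ i Θ f g h = Θ f (pderiv i g) h := rfl
@[simp] theorem pderiv₃_apply : pderiv₃ i Θ f g h = Θ f g (pderiv i h) := rfl

theorem commute_pderiv₁ (j : σ) : Commute (pderiv₁ (R := R) i) (pderiv₁ j) :=
  LinearMap.ext fun Θ => funext₃ fun f g h => by simp [pderiv_comm i j]

theorem commute_pderiv₂ (j : σ) : Commute (pderiv₂ (R := R) i) (pderiv₂ j) :=
  LinearMap.ext fun Θ => funext₃ fun f g h => by simp [pderiv_comm i j]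

theorem commute_pderiv₃ (j : σ) : Commute (pderiv₃ (R := R) i) (pderiv₃ j) :=
  LinearMap.ext fun Θ => funext₃ fun f g h => by simp [pderiv_comm i j]

theorem commute_pderiv₁_pderiv₂ (j : σ) : Commute (pderiv₁ (R := R) i) (pderiv₂ j) := rfl
theorem commute_pderiv₁_pderiv₃ (j : σ) : Commute (pderiv₁ (R := R) i) (pderiv₃ j) := rfl
theorem commute_pderiv₂_pderiv₃ (j : σ) : Commute (pderiv₂ (R := R) i) (pderiv₃ j) := rfl

def compLeft : Ternary R σ := fun f g h => Ψ (Φ f g) h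

def compRight : Ternary R σ := fun f g h => Ψ f (Φ g h)

theorem compLeft_apply : compLeft Ψ Φ f g h = Ψ (Φ f g) h := rfl

theorem compRight_apply : compRight Ψ Φ f g h = Ψ f (Φ g h) := rfl

def eval₃ : Module.End R (Ternary R σ) →+ MvPolynomial σ R where
  toFun T := T (mul₃ R σ) f g h
  map_zero' := rfl
  map_add' _ _ := rfl

theorem eval₃_apply (T : Module.End R (Ternary R σ)) : eval₃ f g h T = T (mul₃ R σ) f g h := rfl

variable (R σ) in
def vanishing (d₁ d₂ d₃ : ℕ) : Submodule R (Ternary R σ) where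
  carrier := {Θ | ∀ f g h, TotalDegreeLT d₁ f ∨ TotalDegreeLT d₂ g ∨ TotalDegreeLT d₃ h →
    Θ f g h = 0}
  add_mem' hΘ hΘ' f g h hfgh := by simp [hΘ f g h hfgh, hΘ' f g h hfgh]
  zero_mem' _ _ _ _ := rfl
  smul_mem' c Θ hΘ f g h hfgh := by simp [hΘ f g h hfgh]

variable {d₁ d₂ d₃ : ℕ} {Θ}

theorem mem_vanishing : Θ ∈ vanishing R σ d₁ d₂ d₃ ↔
    ∀ f g h, TotalDegreeLT d₁ f ∨ TotalDegreeLT d₂ g ∨ TotalDegreeLT d₃ h → Θ f g h = 0 :=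
  Iff.rfl

theorem mul₃_mem_vanishing : mul₃ R σ ∈ vanishing R σ 0 0 0 := by
  rintro f g h (hp | hp | hp) <;> simp [mul₃, hp.eq_zero]

variable [Fintype σ] (π : σ → σ → R)

/-- An operator on the tensor square of `MvPolynomial σ R` followed by multiplication is encoded
by its action on bilinear maps by precomposition, applied to `LinearMap.mul`; thus
`f ⋆ g = ∑ₘ (1/m!) (contract π ^ m) μ f g`. The three-slot copies act in the same way on
arbitrary functions of three polynomials. -/
def contract : Module.End R (Bilin R σ) := contraction π pderivLeft pderivRight

def contract₁₂ : Module.End R (Ternary R σ) := contraction π pderiv₁ pderiv₂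

def contract₁₃ : Module.End R (Ternary R σ) := contraction π pderiv₁ pderiv₃

def contract₂₃ : Module.End R (Ternary R σ) := contraction π pderiv₂ pderiv₃

theorem contract_apply :
    contract π Ψ f g = ∑ i, ∑ j, π i j • Ψ (pderiv i f) (pderiv j g) := by
  simp [contract, contraction_apply, LinearMap.sum_apply]

theorem commute_contract₁₂_contract₁₃ : Commute (contract₁₂ π) (contract₁₃ π) :=
  commute_contraction commute_pderiv₁ commute_pderiv₁_pderiv₃
    (fun j k => (commute_pderiv₁_pderiv₂ k j).symm) commute_pderiv₂_pderiv₃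

theorem commute_contract₁₂_contract₂₃ : Commute (contract₁₂ π) (contract₂₃ π) :=
  commute_contraction commute_pderiv₁_pderiv₂ commute_pderiv₁_pderiv₃
    commute_pderiv₂ commute_pderiv₂_pderiv₃

theorem commute_contract₁₃_contract₂₃ : Commute (contract₁₃ π) (contract₂₃ π) :=
  commute_contraction commute_pderiv₁_pderiv₂ commute_pderiv₁_pderiv₃
    (fun j k => (commute_pderiv₂_pderiv₃ k j).symm) commute_pderiv₃

theorem compLeft_contract : compLeft Ψ (contract π Φ) = contract₁₂ π (compLeft Ψ Φ) := by
  funext f g h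
  simp [compLeft, contract₁₂, contraction_apply, contract_apply, LinearMap.sum_apply]

theorem compRight_contract : compRight Ψ (contract π Φ) = contract₂₃ π (compRight Ψ Φ) := by
  funext f g h
  simp [compRight, contract₂₃, contraction_apply, contract_apply]

theorem compLeft_contract_mul :
    compLeft (contract π Ψ) (LinearMap.mul R _) =
      (contract₁₃ π + contract₂₃ π) (compLeft Ψ (LinearMap.mul R _)) := by
  funext f g h
  simp [compLeft, contract₁₃, contract₂₃, contraction_apply, contract_apply, pderiv_mul,
    -Derivation.leibniz, sum_add_distrib]

theorem compRight_contract_mul :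
    compRight (contract π Ψ) (LinearMap.mul R _) =
      (contract₁₂ π + contract₁₃ π) (compRight Ψ (LinearMap.mul R _)) := by
  funext f g h
  simp [compRight, contract₁₂, contract₁₃, contraction_apply, contract_apply, pderiv_mul,
    -Derivation.leibniz, sum_add_distrib]

theorem compLeft_contract_pow_mul (m : ℕ) :
    compLeft ((contract π ^ m) (LinearMap.mul R _)) (LinearMap.mul R _) =
      ((contract₁₃ π + contract₂₃ π) ^ m) (mul₃ R σ) := by
  induction m with
  | zero => rfl
  | succ m ih => rw [pow_succ', pow_succ', Module.End.mul_apply, Module.End.mul_apply,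
      compLeft_contract_mul, ih]

theorem compLeft_contract_pow (m p : ℕ) :
    compLeft ((contract π ^ m) (LinearMap.mul R _)) ((contract π ^ p) (LinearMap.mul R _)) =
      (contract₁₂ π ^ p * (contract₁₃ π + contract₂₃ π) ^ m) (mul₃ R σ) := by
  induction p with
  | zero => rw [pow_zero, Module.End.one_apply, pow_zero, one_mul, compLeft_contract_pow_mul]
  | succ p ih =>
    rw [pow_succ', Module.End.mul_apply, compLeft_contract, ih, pow_succ', mul_assoc]
    rfl

theorem compRight_contract_pow_mul (m : ℕ) :
    compRight ((contract π ^ m) (LinearMap.mul R _)) (LinearMap.mul R _) =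
      ((contract₁₂ π + contract₁₃ π) ^ m) (mul₃ R σ) := by
  induction m with
  | zero => funext f g h; exact (mul_assoc f g h).symm
  | succ m ih => rw [pow_succ', pow_succ', Module.End.mul_apply, Module.End.mul_apply,
      compRight_contract_mul, ih]

theorem compRight_contract_pow (m p : ℕ) :
    compRight ((contract π ^ m) (LinearMap.mul R _)) ((contract π ^ p) (LinearMap.mul R _)) =
      (contract₂₃ π ^ p * (contract₁₂ π + contract₁₃ π) ^ m) (mul₃ R σ) := by
  induction p with
  | zero => rw [pow_zero, Module.End.one_apply, pow_zero, one_mul, compRight_contract_pow_mul]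
  | succ p ih =>
    rw [pow_succ', Module.End.mul_apply, compRight_contract, ih, pow_succ', mul_assoc]
    rfl

theorem contract_pow_mul_apply_eq_zero (m : ℕ) {f g : MvPolynomial σ R}
    (hfg : TotalDegreeLT m f ∨ TotalDegreeLT m g) :
    (contract π ^ m) (LinearMap.mul R _) f g = 0 := by
  induction m generalizing f g with
  | zero => rcases hfg with hp | hp <;> simp [hp.eq_zero]
  | succ m ih =>
    rw [pow_succ', Module.End.mul_apply, contract_apply]
    exact sum_eq_zero fun i _ => sum_eq_zero fun j _ => by
      rw [ih (hfg.imp (·.pderiv i) (·.pderiv j)), smul_zero]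

theorem contract₁₂_mem (hΘ : Θ ∈ vanishing R σ d₁ d₂ d₃) :
    contract₁₂ π Θ ∈ vanishing R σ (d₁ + 1) (d₂ + 1) d₃ := by
  refine contraction_apply_mem (fun i j Θ' hΘ' => ?_) hΘ
  rw [mem_vanishing] at hΘ' ⊢
  exact fun f g h hfgh => hΘ' _ _ _ (hfgh.imp (·.pderiv i) (Or.imp_left (·.pderiv j)))

theorem contract₁₃_mem (hΘ : Θ ∈ vanishing R σ d₁ d₂ d₃) :
    contract₁₃ π Θ ∈ vanishing R σ (d₁ + 1) d₂ (d₃ + 1) := by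
  refine contraction_apply_mem (fun i j Θ' hΘ' => ?_) hΘ
  rw [mem_vanishing] at hΘ' ⊢
  exact fun f g h hfgh => hΘ' _ _ _ (hfgh.imp (·.pderiv i) (Or.imp_right (·.pderiv j)))

theorem contract₂₃_mem (hΘ : Θ ∈ vanishing R σ d₁ d₂ d₃) :
    contract₂₃ π Θ ∈ vanishing R σ d₁ (d₂ + 1) (d₃ + 1) := by
  refine contraction_apply_mem (fun i j Θ' hΘ' => ?_) hΘ
  rw [mem_vanishing] at hΘ' ⊢
  exact fun f g h hfgh => hΘ' _ _ _ (hfgh.imp_right (Or.imp (·.pderiv i) (·.pderiv j)))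

theorem contract_pow_mul₃_mem_vanishing (a b c : ℕ) :
    (contract₁₂ π ^ a * contract₁₃ π ^ b * contract₂₃ π ^ c) (mul₃ R σ) ∈
      vanishing R σ (a + b) (a + c) (b + c) := by
  have h₂₃ : ∀ c, (contract₂₃ π ^ c) (mul₃ R σ) ∈ vanishing R σ 0 c c := by
    intro c
    induction c with
    | zero => exact mul₃_mem_vanishing
    | succ c ih => rw [pow_succ', Module.End.mul_apply]; exact contract₂₃_mem π ih
  have h₁₃ : ∀ b, (contract₁₃ π ^ b * contract₂₃ π ^ c) (mul₃ R σ) ∈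
      vanishing R σ b c (b + c) := by
    intro b
    induction b with
    | zero => simpa using h₂₃ c
    | succ b ih =>
      rw [pow_succ', mul_assoc, Module.End.mul_apply, add_right_comm]
      exact contract₁₃_mem π ih
  induction a with
  | zero => simpa using h₁₃ b
  | succ a ih =>
    rw [pow_succ', mul_assoc, mul_assoc, Module.End.mul_apply, ← mul_assoc, add_right_comm a 1 b,
      add_right_comm a 1 c]
    exact contract₁₂_mem π ih

end Moyal

end

section MoyalProduct

variable {k : Type*} {n : ℕ}

theorem iterPDeriv_pderiv [CommSemiring k] (l : List (Fin n)) (i : Fin n)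
    (f : MvPolynomial (Fin n) k) : iterPDeriv l (pderiv i f) = pderiv i (iterPDeriv l f) := by
  induction l with
  | nil => rfl
  | cons j l ih => exact (congrArg (pderiv j) ih).trans (pderiv_comm j i _)

theorem iterPDeriv_ofFn_cons [CommSemiring k] {m : ℕ} (i : Fin n) (v : Fin m → Fin n)
    (f : MvPolynomial (Fin n) k) :
    iterPDeriv (List.ofFn (Fin.cons i v : Fin (m + 1) → Fin n)) f =
      iterPDeriv (List.ofFn v) (pderiv i f) := by
  rw [List.ofFn_succ, iterPDeriv_pderiv]
  simp only [Fin.cons_zero, Fin.cons_succ]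
  rfl

theorem sum_iterPDeriv_eq_contract_pow [CommSemiring k] (π : Fin n → Fin n → k) (m : ℕ)
    (f g : MvPolynomial (Fin n) k) :
    ∑ iv : Fin m → Fin n, ∑ jv : Fin m → Fin n,
        C (∏ r : Fin m, π (iv r) (jv r)) * iterPDeriv (List.ofFn iv) f *
          iterPDeriv (List.ofFn jv) g =
      (Moyal.contract π ^ m) (LinearMap.mul k _) f g := by
  induction m generalizing f g with
  | zero => simp [iterPDeriv]
  | succ m ih =>
    rw [pow_succ', Module.End.mul_apply, Moyal.contract_apply]
    simp only [← ih, Fintype.sum_fin_succ_pi, Fin.prod_univ_succ, Fin.cons_zero, Fin.cons_succ,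
      iterPDeriv_ofFn_cons, smul_sum, smul_eq_C_mul, map_mul]
    refine sum_congr rfl fun i _ => ?_
    rw [sum_comm]
    exact sum_congr rfl fun j _ => sum_congr rfl fun iv _ => sum_congr rfl fun jv _ => by ring

variable [CommRing k] [Algebra ℚ k] (π : Fin n → Fin n → k)

theorem moyalTerm_eq_smul (m : ℕ) (f g : MvPolynomial (Fin n) k) :
    moyalTerm π m f g = (m ! : ℚ)⁻¹ • (Moyal.contract π ^ m) (LinearMap.mul k _) f g := by
  rw [moyalTerm, sum_iterPDeriv_eq_contract_pow, ← Algebra.smul_def, one_div]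

theorem moyalTerm_eq_zero {m : ℕ} {f g : MvPolynomial (Fin n) k}
    (hfg : TotalDegreeLT m f ∨ TotalDegreeLT m g) : moyalTerm π m f g = 0 := by
  rw [moyalTerm_eq_smul, Moyal.contract_pow_mul_apply_eq_zero π m hfg, smul_zero]

theorem moyalTerm_zero (f g : MvPolynomial (Fin n) k) : moyalTerm π 0 f g = f * g := by
  simp [moyalTerm_eq_smul]

theorem moyalMul_eq_sum_range {N : ℕ} {f g : MvPolynomial (Fin n) k}
    (hfg : TotalDegreeLT N f ∨ TotalDegreeLT N g) :
    moyalMul π f g = ∑ m ∈ range N, moyalTerm π m f g := by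
  refine finsum_eq_sum_of_support_subset _ fun m hm => ?_
  by_contra hmN
  have hNm : N ≤ m := by simpa using hmN
  exact hm (moyalTerm_eq_zero π (hfg.imp (·.mono hNm) (·.mono hNm)))

theorem moyalMul_one_left (f : MvPolynomial (Fin n) k) : moyalMul π 1 f = f := by
  rw [moyalMul_eq_sum_range π (N := 1) (.inl (totalDegreeLT_of_totalDegree_lt (by simp))),
    sum_range_one, moyalTerm_zero, one_mul]

theorem moyalMul_one_right (f : MvPolynomial (Fin n) k) : moyalMul π f 1 = f := by
  rw [moyalMul_eq_sum_range π (N := 1) (.inr (totalDegreeLT_of_totalDegree_lt (by simp))),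
    sum_range_one, moyalTerm_zero, mul_one]

open Moyal

theorem moyalMul_moyalMul_left_eq_sum {N : ℕ} {f h : MvPolynomial (Fin n) k}
    (g : MvPolynomial (Fin n) k) (hf : TotalDegreeLT N f) (hh : TotalDegreeLT N h) :
    moyalMul π (moyalMul π f g) h = ∑ a ∈ range N, ∑ b ∈ range N, ∑ c ∈ range N,
      ((a ! * b ! * c ! : ℚ)⁻¹) •
        (contract₁₂ π ^ a * contract₁₃ π ^ b * contract₂₃ π ^ c) (mul₃ k (Fin n)) f g h := by
  rw [moyalMul_eq_sum_range π (.inr hh), moyalMul_eq_sum_range π (.inl hf)]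
  simp only [moyalTerm_eq_smul, map_sum, map_rat_smul, LinearMap.sum_apply, LinearMap.smul_apply,
    smul_sum, smul_smul, ← compLeft_apply, compLeft_contract_pow, ← eval₃_apply]
  exact sum_range_inv_factorial_smul_add_pow _ (commute_contract₁₃_contract₂₃ π)
    fun a b c hbc => contract_pow_mul₃_mem_vanishing π a b c f g h (.inr (.inr (hh.mono hbc)))

theorem moyalMul_moyalMul_right_eq_sum {N : ℕ} {f h : MvPolynomial (Fin n) k}
    (g : MvPolynomial (Fin n) k) (hf : TotalDegreeLT N f) (hh : TotalDegreeLT N h) :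
    moyalMul π f (moyalMul π g h) = ∑ a ∈ range N, ∑ b ∈ range N, ∑ c ∈ range N,
      ((a ! * b ! * c ! : ℚ)⁻¹) •
        (contract₁₂ π ^ a * contract₁₃ π ^ b * contract₂₃ π ^ c) (mul₃ k (Fin n)) f g h := by
  have hcomm : ∀ a b c, contract₂₃ π ^ c * contract₁₂ π ^ a * contract₁₃ π ^ b =
      contract₁₂ π ^ a * contract₁₃ π ^ b * contract₂₃ π ^ c := fun a b c => by
    rw [((commute_contract₁₂_contract₂₃ π).symm.pow_pow c a).eq, mul_assoc,
      ((commute_contract₁₃_contract₂₃ π).symm.pow_pow c b).eq, mul_assoc]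
  rw [moyalMul_eq_sum_range π (.inl hf), moyalMul_eq_sum_range π (.inr hh)]
  simp only [moyalTerm_eq_smul, map_sum, map_rat_smul, smul_sum, smul_smul, ← compRight_apply,
    compRight_contract_pow, ← eval₃_apply]
  -- Here `x, y, z` are `contract₂₃, contract₁₂, contract₁₃`, so its indices `(a, b, c)` are our
  -- `(c, a, b)`.
  rw [sum_range_inv_factorial_smul_add_pow _ (commute_contract₁₂_contract₁₃ π)
    fun c a b hab => by
      rw [hcomm]; exact contract_pow_mul₃_mem_vanishing π a b c f g h (.inl (hf.mono hab))]
  refine sum_comm.trans (sum_congr rfl fun a _ => sum_comm.trans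
    (sum_congr rfl fun b _ => sum_congr rfl fun c _ => ?_))
  rw [eval₃_apply, eval₃_apply, hcomm]
  congr 1
  ring

end MoyalProduct

/-- over a commutative `ℚ`-algebra `k`, for any constant matrix `π`,
the Moyal-type product `⋆` on the polynomial algebra `k[x_1,…,x_n]` is associative and
has `1` as a two-sided unit. -/
theorem moyalMul_assoc_and_unital
    {k : Type*} [CommRing k] [Algebra ℚ k] {n : ℕ} (π : Fin n → Fin n → k) :
    (∀ f g h : MvPolynomial (Fin n) k,
      moyalMul π (moyalMul π f g) h = moyalMul π f (moyalMul π g h)) ∧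
    (∀ f : MvPolynomial (Fin n) k, moyalMul π 1 f = f ∧ moyalMul π f 1 = f) := by
  refine ⟨fun f g h => ?_, fun f => ⟨moyalMul_one_left π f, moyalMul_one_right π f⟩⟩
  have hf : TotalDegreeLT (f.totalDegree + h.totalDegree + 1) f :=
    totalDegreeLT_of_totalDegree_lt (by omega)
  have hh : TotalDegreeLT (f.totalDegree + h.totalDegree + 1) h :=
    totalDegreeLT_of_totalDegree_lt (by omega)
  rw [moyalMul_moyalMul_left_eq_sum π g hf hh, moyalMul_moyalMul_right_eq_sum π g hf hh]
end
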